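/- Let c = (a+1)² + (a+2j+3)² + 6j + 6 and define the rational functions φ'(j,a) = ∑_{i=0}^{j} 1/((a+2i)(a+1+2i)). Then φ' satisfies the recursion a·φ'(j+1,a) = ((1 + 4/c)/(a+2)² + 1/c)·(a+1)(a+2)²·φ'(j,a+2) − (1/c)(a+1)(a+2)(a+3)·φ'(j-1,a+4) + (1/c)·a(a+2j+2)(a+2j+3)·φ'(j,a) − (1/c)(a+1)(a+2j+2)(a+2j+3)·φ'(j-1,a+2) + (4/c)(a+2j+3)·φ'(j,-a-2j-2), for all j ≥ 2, as an identity of rational functions in a. -/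

import Mathlib

open Finset

/-- `φ'(j, x) = ∑_{i=0}^{j} 1/((x + 2i)(x + 1 + 2i))`, as a rational function of `x`. -/
noncomputable def phi' (j : ℕ) (x : RatFunc ℚ) : RatFunc ℚ :=
  ∑ i ∈ Finset.range (j + 1),
    1 / ((x + 2 * (i : RatFunc ℚ)) * (x + 1 + 2 * (i : RatFunc ℚ)))

lemma Xn_ne (m : ℕ) : (RatFunc.X : RatFunc ℚ) + (m : RatFunc ℚ) ≠ 0 := by
  have h : (Polynomial.X + (m : Polynomial ℚ)) ≠ 0 := by
    intro h
    have h2 := congrArg (fun p => Polynomial.coeff p 1) h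
    simp at h2
  have h3 := RatFunc.algebraMap_ne_zero h
  simpa using h3

lemma phiA (n : ℕ) (x : RatFunc ℚ) :
    phi' (n + 1) x = 1 / (x * (x + 1)) + phi' n (x + 2) := by
  unfold phi'
  rw [Finset.sum_range_succ']
  have hsum : ∑ i ∈ Finset.range (n + 1),
      1 / ((x + 2 * ((i + 1 : ℕ) : RatFunc ℚ)) * (x + 1 + 2 * ((i + 1 : ℕ) : RatFunc ℚ)))
      = ∑ i ∈ Finset.range (n + 1),
      1 / ((x + 2 + 2 * (i : RatFunc ℚ)) * (x + 2 + 1 + 2 * (i : RatFunc ℚ))) := by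
    refine Finset.sum_congr rfl fun i _ => ?_
    push_cast
    ring
  rw [hsum]
  push_cast
  ring

lemma phiB (n : ℕ) (x : RatFunc ℚ) :
    phi' (n + 1) x = phi' n x
      + 1 / ((x + 2 * ((n : RatFunc ℚ) + 1)) * (x + 1 + 2 * ((n : RatFunc ℚ) + 1))) := by
  unfold phi'
  rw [Finset.sum_range_succ]
  congr 1

lemma phiC (n : ℕ) (x : RatFunc ℚ) :
    phi' n (-x - 2 * (n : RatFunc ℚ) - 2) = phi' n (x + 1) := by
  unfold phi'
  rw [← Finset.sum_range_reflect]
  refine Finset.sum_congr rfl fun i hi => ?_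
  rw [Finset.mem_range] at hi
  have hle : i ≤ n := Nat.lt_succ_iff.mp hi
  simp only [Nat.add_sub_cancel]
  push_cast [Nat.cast_sub hle]
  ring_nf

lemma phiD (n : ℕ) (x : RatFunc ℚ) (h : ∀ i : ℕ, x + (i : RatFunc ℚ) ≠ 0) :
    phi' n x + phi' n (x + 1) = 1 / x - 1 / (x + 2 * (n : RatFunc ℚ) + 2) := by
  induction n with
  | zero =>
      have h0 : x ≠ 0 := by simpa using h 0
      have h1 : x + 1 ≠ 0 := by simpa using h 1
      have h2 : x + 2 ≠ 0 := fun h0 => (h 2) (by push_cast; linear_combination h0)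
      have h2' : x + 1 + 1 ≠ 0 := fun h0 => (h 2) (by push_cast; linear_combination h0)
      have h2'' : x + 2 * (0 : ℕ) + 2 ≠ 0 := fun h0 => (h 2) (by push_cast; linear_combination h0)
      simp only [phi', zero_add, Finset.sum_range_one]
      push_cast [mul_zero, add_zero]
      field_simp
      ring
  | succ n ih =>
      rw [phiB n x, phiB n (x + 1)]
      have hA : x + 2 * ((n : RatFunc ℚ) + 1) ≠ 0 :=
        fun h0 => (h (2 * n + 2)) (by push_cast; linear_combination h0)
      have hB : x + 1 + 2 * ((n : RatFunc ℚ) + 1) ≠ 0 :=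
        fun h0 => (h (2 * n + 3)) (by push_cast; linear_combination h0)
      have hC : x + 1 + 1 + 2 * ((n : RatFunc ℚ) + 1) ≠ 0 :=
        fun h0 => (h (2 * n + 4)) (by push_cast; linear_combination h0)
      have hD : x + 2 * (n : RatFunc ℚ) + 2 ≠ 0 :=
        fun h0 => (h (2 * n + 2)) (by push_cast; linear_combination h0)
      have hE : x + 2 * ((n : RatFunc ℚ) + 1) + 2 ≠ 0 :=
        fun h0 => (h (2 * n + 4)) (by push_cast; linear_combination h0)
      have ht : 1 / ((x + 2 * ((n : RatFunc ℚ) + 1)) * (x + 1 + 2 * ((n : RatFunc ℚ) + 1)))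
          + 1 / ((x + 1 + 2 * ((n : RatFunc ℚ) + 1)) * (x + 1 + 1 + 2 * ((n : RatFunc ℚ) + 1)))
          = 1 / (x + 2 * (n : RatFunc ℚ) + 2) - 1 / (x + 2 * ((n : RatFunc ℚ) + 1) + 2) := by
        field_simp
        ring
      push_cast
      linear_combination ih + ht

set_option maxHeartbeats 1000000 in
lemma endgame {F : Type*} [Field F] (x κ p c : F)
    (hcdef : c = (x + 1) ^ 2 + (x + 2 * (κ + 2) + 3) ^ 2 + 6 * (κ + 2) + 6)
    (h0 : x ≠ 0) (h1 : x + 1 ≠ 0) (h2 : x + 2 ≠ 0) (h3 : x + 3 ≠ 0)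
    (hA1 : x + 2 + 2 * (κ + 1 + 1) ≠ 0) (hA2 : x + 2 + 1 + 2 * (κ + 1 + 1) ≠ 0)
    (hA3 : x + 2 * (κ + 2) + 2 ≠ 0) (hc : c ≠ 0) :
    x * (1 / (x * (x + 1)) + (p + 1 / ((x + 2 + 2 * (κ + 1 + 1)) * (x + 2 + 1 + 2 * (κ + 1 + 1))))) =
    ((1 + 4 / c) / (x + 2) ^ 2 + 1 / c) * (x + 1) * (x + 2) ^ 2 *
              (p + 1 / ((x + 2 + 2 * (κ + 1 + 1)) * (x + 2 + 1 + 2 * (κ + 1 + 1)))) -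
            1 / c * (x + 1) * (x + 2) * (x + 3) *
              (p + 1 / ((x + 2 + 2 * (κ + 1 + 1)) * (x + 2 + 1 + 2 * (κ + 1 + 1))) -
                1 / ((x + 2) * (x + 3))) +
          1 / c * x * (x + 2 * (κ + 2) + 2) * (x + 2 * (κ + 2) + 3) * (1 / (x * (x + 1)) + p) -
        1 / c * (x + 1) * (x + 2 * (κ + 2) + 2) * (x + 2 * (κ + 2) + 3) * p +
      4 / c * (x + 2 * (κ + 2) + 3) * (1 / x - 1 / (x + 2 * (κ + 2) + 2) - (1 / (x * (x + 1)) + p)) := by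
  have claimB : (x + 1) * (4 + (x + 2) ^ 2)
      - (x + 1) * (x + 2) * (x + 3)
      + x * (x + 2 * (κ + 2) + 2) * (x + 2 * (κ + 2) + 3)
      - (x + 1) * (x + 2 * (κ + 2) + 2) * (x + 2 * (κ + 2) + 3)
      - 4 * (x + 2 * (κ + 2) + 3) = -c := by
    rw [hcdef]; ring
  have claimC : (x + 1) * (4 + (x + 2) ^ 2)
        * (1 / ((x + 2 + 2 * (κ + 1 + 1)) * (x + 2 + 1 + 2 * (κ + 1 + 1))))
      - (x + 1) * (x + 2) * (x + 3)
        * (1 / ((x + 2 + 2 * (κ + 1 + 1)) * (x + 2 + 1 + 2 * (κ + 1 + 1)))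
            - 1 / ((x + 2) * (x + 3)))
      + x * (x + 2 * (κ + 2) + 2) * (x + 2 * (κ + 2) + 3) * (1 / (x * (x + 1)))
      + 4 * (x + 2 * (κ + 2) + 3)
        * (1 / x - 1 / (x + 2 * (κ + 2) + 2) - 1 / (x * (x + 1)))
      = c * (x * (1 / (x * (x + 1)))
          - 1 / ((x + 2 + 2 * (κ + 1 + 1)) * (x + 2 + 1 + 2 * (κ + 1 + 1)))) := by
    have s1 : x * (x + 2 * (κ + 2) + 2) * (x + 2 * (κ + 2) + 3) * (1 / (x * (x + 1)))
        = (x + 2 * (κ + 2) + 2) * (x + 2 * (κ + 2) + 3) / (x + 1) := by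
      field_simp
    have s2 : 4 * (x + 2 * (κ + 2) + 3)
          * (1 / x - 1 / (x + 2 * (κ + 2) + 2) - 1 / (x * (x + 1)))
        = 4 * (x + 2 * (κ + 2) + 3) / (x + 1)
            - 4 * (x + 2 * (κ + 2) + 3) / (x + 2 * (κ + 2) + 2) := by
      field_simp
      ring
    have s3 : (x + 1) * (x + 2) * (x + 3)
          * (1 / ((x + 2 + 2 * (κ + 1 + 1)) * (x + 2 + 1 + 2 * (κ + 1 + 1)))
              - 1 / ((x + 2) * (x + 3)))
        = (x + 1) * (x + 2) * (x + 3)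
            / ((x + 2 + 2 * (κ + 1 + 1)) * (x + 2 + 1 + 2 * (κ + 1 + 1))) - (x + 1) := by
      field_simp
    have s4 : c * (x * (1 / (x * (x + 1)))
          - 1 / ((x + 2 + 2 * (κ + 1 + 1)) * (x + 2 + 1 + 2 * (κ + 1 + 1))))
        = c / (x + 1) - c / ((x + 2 + 2 * (κ + 1 + 1)) * (x + 2 + 1 + 2 * (κ + 1 + 1))) := by
      field_simp
    rw [s1, s2, s3, s4, hcdef]
    field_simp
    ring
  have hA' : ((1 + 4 / c) / (x + 2) ^ 2 + 1 / c) * (x + 1) * (x + 2) ^ 2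
      = (x + 1) + (x + 1) * (4 + (x + 2) ^ 2) / c := by
    field_simp
    ring
  have fc : c * c⁻¹ = 1 := mul_inv_cancel₀ hc
  rw [hA']
  linear_combination (-(p / c)) * claimB + (-(1 / c)) * claimC
    + (p - x * (1 / (x * (x + 1)))
        + 1 / ((x + 2 + 2 * (κ + 1 + 1)) * (x + 2 + 1 + 2 * (κ + 1 + 1)))) * fc

set_option maxHeartbeats 1000000 in
/-- With `c = (a+1)² + (a+2j+3)² + 6j + 6`, the function `φ'` satisfies, for all `j ≥ 2`, the
recursion
`a·φ'(j+1,a) = ((1 + 4/c)/(a+2)² + 1/c)(a+1)(a+2)²·φ'(j,a+2)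
  − (1/c)(a+1)(a+2)(a+3)·φ'(j-1,a+4) + (1/c)a(a+2j+2)(a+2j+3)·φ'(j,a)
  − (1/c)(a+1)(a+2j+2)(a+2j+3)·φ'(j-1,a+2) + (4/c)(a+2j+3)·φ'(j,-a-2j-2)`,
as an identity of rational functions in `a`. -/
theorem stmt_12 (j : ℕ) (hj : 2 ≤ j) :
    let X : RatFunc ℚ := RatFunc.X
    let c : RatFunc ℚ := (X + 1) ^ 2 + (X + 2 * (j : RatFunc ℚ) + 3) ^ 2
        + 6 * (j : RatFunc ℚ) + 6
    X * phi' (j + 1) X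
      = ((1 + 4 / c) / (X + 2) ^ 2 + 1 / c) * (X + 1) * (X + 2) ^ 2 * phi' j (X + 2)
        - (1 / c) * (X + 1) * (X + 2) * (X + 3) * phi' (j - 1) (X + 4)
        + (1 / c) * X * (X + 2 * (j : RatFunc ℚ) + 2) * (X + 2 * (j : RatFunc ℚ) + 3)
            * phi' j X
        - (1 / c) * (X + 1) * (X + 2 * (j : RatFunc ℚ) + 2) * (X + 2 * (j : RatFunc ℚ) + 3)
            * phi' (j - 1) (X + 2)
        + (4 / c) * (X + 2 * (j : RatFunc ℚ) + 3)
            * phi' j (-X - 2 * (j : RatFunc ℚ) - 2) := by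
  obtain ⟨k, rfl⟩ : ∃ k, j = k + 2 := ⟨j - 2, by omega⟩
  intro X c
  have hX : X = RatFunc.X := rfl
  have hnz : ∀ i : ℕ, X + (i : RatFunc ℚ) ≠ 0 := fun i => hX ▸ Xn_ne i
  have h0 : X ≠ 0 := by simpa using hnz 0
  have h1 : X + 1 ≠ 0 := fun h => hnz 1 (by push_cast; linear_combination h)
  have h2 : X + 2 ≠ 0 := fun h => hnz 2 (by push_cast; linear_combination h)
  have h3 : X + 3 ≠ 0 := fun h => hnz 3 (by push_cast; linear_combination h)
  have hA1 : X + 2 + 2 * ((k : RatFunc ℚ) + 1 + 1) ≠ 0 :=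
    fun h => hnz (2 * k + 6) (by push_cast; linear_combination h)
  have hA2 : X + 2 + 1 + 2 * ((k : RatFunc ℚ) + 1 + 1) ≠ 0 :=
    fun h => hnz (2 * k + 7) (by push_cast; linear_combination h)
  have hA3 : X + 2 * ((k : RatFunc ℚ) + 2) + 2 ≠ 0 :=
    fun h => hnz (2 * k + 6) (by push_cast; linear_combination h)
  have hc_def : c = (X + 1) ^ 2 + (X + 2 * ((k : RatFunc ℚ) + 2) + 3) ^ 2
      + 6 * ((k : RatFunc ℚ) + 2) + 6 := by
    rw [show c = (X + 1) ^ 2 + (X + 2 * ((k + 2 : ℕ) : RatFunc ℚ) + 3) ^ 2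
        + 6 * ((k + 2 : ℕ) : RatFunc ℚ) + 6 from rfl]
    push_cast
    ring
  have hc : c ≠ 0 := by
    have hp : ((Polynomial.X + 1) ^ 2 + (Polynomial.X + ((2 * k + 7 : ℕ) : Polynomial ℚ)) ^ 2
        + ((6 * k + 18 : ℕ) : Polynomial ℚ)) ≠ 0 := by
      intro h
      have h2 := congrArg (Polynomial.eval 0) h
      simp at h2
      push_cast at h2
      linarith [h2, sq_nonneg (2 * (k : ℚ) + 7), Nat.cast_nonneg (α := ℚ) k]
    have himg := RatFunc.algebraMap_ne_zero hp
    have heq : algebraMap (Polynomial ℚ) (RatFunc ℚ)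
        ((Polynomial.X + 1) ^ 2 + (Polynomial.X + ((2 * k + 7 : ℕ) : Polynomial ℚ)) ^ 2
          + ((6 * k + 18 : ℕ) : Polynomial ℚ))
        = (X + 1) ^ 2 + (X + 2 * ((k : RatFunc ℚ) + 2) + 3) ^ 2
          + 6 * ((k : RatFunc ℚ) + 2) + 6 := by
      rw [hX]
      simp only [map_add, map_pow, map_one, map_natCast, RatFunc.algebraMap_X]
      push_cast
      ring
    rw [hc_def, ← heq]
    exact himg
  have hidx : k + 2 - 1 = k + 1 := rfl
  have e1 : phi' (k + 2 + 1) X = 1 / (X * (X + 1)) + phi' (k + 2) (X + 2) := phiA (k + 2) X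
  have e3 : phi' (k + 1) (X + 4) = phi' (k + 2) (X + 2) - 1 / ((X + 2) * (X + 3)) := by
    rw [phiA (k + 1) (X + 2)]; ring
  have e4 : phi' (k + 2) X = 1 / (X * (X + 1)) + phi' (k + 1) (X + 2) := phiA (k + 1) X
  have e5 : phi' (k + 2) (-X - 2 * ((k + 2 : ℕ) : RatFunc ℚ) - 2) = phi' (k + 2) (X + 1) :=
    phiC (k + 2) X
  have e6 : phi' (k + 2) (X + 1)
      = 1 / X - 1 / (X + 2 * ((k + 2 : ℕ) : RatFunc ℚ) + 2) - phi' (k + 2) X := by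
    linear_combination phiD (k + 2) X hnz
  have e2 : phi' (k + 2) (X + 2) = phi' (k + 1) (X + 2)
      + 1 / ((X + 2 + 2 * (((k + 1 : ℕ) : RatFunc ℚ) + 1))
          * (X + 2 + 1 + 2 * (((k + 1 : ℕ) : RatFunc ℚ) + 1))) := phiB (k + 1) (X + 2)
  rw [hidx, e1, e3, e5, e6, e4, e2]
  push_cast
  exact endgame X (k : RatFunc ℚ) (phi' (k + 1) (X + 2)) c hc_def h0 h1 h2 h3 hA1 hA2 hA3 hc
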